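/- Let n ≥ 2, λ ∈ ℂ with |λ| = 1, u = (1,i)ᵀ/√2 ∈ ℂ², and define the n-mode tensor T_{n,λ} = (λ·⊗ⁿu + conj(λ)·⊗ⁿconj(u))/√2 on ℂ². Then ‖T_{n,λ}‖_{∞,ℂ} = 1/√2 and ‖T_{n,λ}‖_{1,ℂ} = √2. -/

import Mathlib

noncomputable section


/-- The Euclidean norm of a vector in `𝕜^k`. -/
def vnorm {𝕜 : Type*} [RCLike 𝕜] {k : ℕ} (x : Fin k → 𝕜) : ℝ :=
  Real.sqrt (∑ i, ‖x i‖ ^ 2)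

/-- The rank-one tensor `x₁ ⊗ ⋯ ⊗ x_d` on `𝕜^n`. -/
def rankOne {𝕜 : Type*} [RCLike 𝕜] {d n : ℕ} (x : Fin d → Fin n → 𝕜) :
    (Fin d → Fin n) → 𝕜 :=
  fun i => ∏ j, x j (i j)

/-- The standard inner product `⟨T, Y⟩ = ∑ tᵢ · conj yᵢ` of tensors. -/
def tinner {𝕜 : Type*} [RCLike 𝕜] {d n : ℕ} (T Y : (Fin d → Fin n) → 𝕜) : 𝕜 :=
  ∑ i, T i * (starRingEnd 𝕜) (Y i)

/-- The Hilbert–Schmidt norm of a tensor. -/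
def hsNorm {𝕜 : Type*} [RCLike 𝕜] {d n : ℕ} (T : (Fin d → Fin n) → 𝕜) : ℝ :=
  Real.sqrt (∑ i, ‖T i‖ ^ 2)

/-- The spectral norm of a tensor:
`max {|⟨T, x₁⊗⋯⊗x_d⟩| : ‖x_j‖ = 1 for all j}`. -/
def specNorm {𝕜 : Type*} [RCLike 𝕜] {d n : ℕ} (T : (Fin d → Fin n) → 𝕜) : ℝ :=
  sSup {r : ℝ | ∃ x : Fin d → Fin n → 𝕜, (∀ j, vnorm (x j) = 1) ∧
    r = ‖tinner T (rankOne x)‖}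

/-- The nuclear norm of a tensor:
`min {∑ᵢ ∏ⱼ ‖x_{i,j}‖ : T = ∑ᵢ x_{i,1}⊗⋯⊗x_{i,d}}`. -/
def nucNorm {𝕜 : Type*} [RCLike 𝕜] {d n : ℕ} (T : (Fin d → Fin n) → 𝕜) : ℝ :=
  sInf {r : ℝ | ∃ (m : ℕ) (x : Fin m → Fin d → Fin n → 𝕜),
    T = (∑ i, rankOne (x i)) ∧ r = ∑ i, ∏ j, vnorm (x i j)}

/-- `α(n^{×d}, 𝕜)`. -/
def alphaN (𝕜 : Type*) [RCLike 𝕜] (d n : ℕ) : ℝ :=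
  sSup {r : ℝ | ∃ T : (Fin d → Fin n) → 𝕜, hsNorm T = 1 ∧ r = nucNorm T}

/-- `β(n^{×d}, 𝕜)`. -/
def betaN (𝕜 : Type*) [RCLike 𝕜] (d n : ℕ) : ℝ :=
  sInf {r : ℝ | ∃ T : (Fin d → Fin n) → 𝕜, hsNorm T = 1 ∧ r = specNorm T}

/-- The vector `u = (1, i)ᵀ/√2 ∈ ℂ²`. -/
def uvec : Fin 2 → ℂ := fun k =>
  if k = 0 then (Real.sqrt 2 : ℂ)⁻¹ else Complex.I * (Real.sqrt 2 : ℂ)⁻¹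

/-- The tensor `T_{n,λ} = (λ·⊗ⁿu + conj λ·⊗ⁿ(conj u))/√2` on `ℂ²`. -/
def Tnl (n : ℕ) (lam : ℂ) : (Fin n → Fin 2) → ℂ := fun i =>
  (lam * ∏ j, uvec (i j) +
    (starRingEnd ℂ) lam * ∏ j, (starRingEnd ℂ) (uvec (i j))) / (Real.sqrt 2 : ℂ)

/-!
Since `u` and `conj u` form an orthonormal basis of `ℂ²`, the numbers `a_j = ⟨u, x_j⟩` and
`b_j = ⟨conj u, x_j⟩` satisfy `|a_j|² + |b_j|² = ‖x_j‖²`, and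
`⟨T, x₁ ⊗ ⋯ ⊗ x_n⟩ = (λ ∏ a_j + conj λ ∏ b_j) / √2`. For `n ≥ 2`, Cauchy–Schwarz on two of the
factors gives `∏ |a_j| + ∏ |b_j| ≤ ∏ ‖x_j‖`, so `‖T‖_∞ ≤ 1/√2`, with equality at `x_j = u`.
As `⟨T, T⟩ = 1`, pairing `T` with any decomposition `T = ∑ᵢ x_{i,1} ⊗ ⋯ ⊗ x_{i,n}` gives
`1 ≤ ‖T‖_∞ ∑ᵢ ∏ⱼ ‖x_{i,j}‖`, hence `‖T‖₁ ≥ √2`; the two-term decomposition defining `T` costs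
exactly `√2`.
-/

open ComplexConjugate Finset

section General

variable {𝕜 : Type*} [RCLike 𝕜]

lemma vnorm_sq {k : ℕ} (x : Fin k → 𝕜) : vnorm x ^ 2 = ∑ i, ‖x i‖ ^ 2 :=
  Real.sq_sqrt (by positivity)

lemma vnorm_nonneg {k : ℕ} (x : Fin k → 𝕜) : 0 ≤ vnorm x := Real.sqrt_nonneg _

lemma vnorm_smul {k : ℕ} (c : 𝕜) (x : Fin k → 𝕜) : vnorm (c • x) = ‖c‖ * vnorm x := by
  simp only [vnorm, Pi.smul_apply, smul_eq_mul, norm_mul, mul_pow, ← mul_sum]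
  rw [Real.sqrt_mul (by positivity), Real.sqrt_sq (norm_nonneg c)]

lemma vnorm_star {k : ℕ} (x : Fin k → 𝕜) : vnorm (star x) = vnorm x := by
  simp [vnorm]

lemma tinner_eq_dotProduct {d n : ℕ} (T Y : (Fin d → Fin n) → 𝕜) :
    tinner T Y = T ⬝ᵥ star Y :=
  rfl

lemma tinner_rankOne {d n : ℕ} (x y : Fin d → Fin n → 𝕜) :
    tinner (rankOne x) (rankOne y) = ∏ j, x j ⬝ᵥ star (y j) := by
  simp only [tinner, rankOne, dotProduct, Pi.star_apply, prod_univ_sum,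
    Fintype.piFinset_univ, map_prod, starRingEnd_apply, ← prod_mul_distrib]

lemma rankOne_cons_smul {k n : ℕ} (c : 𝕜) (v : Fin n → 𝕜) :
    rankOne (Fin.cons (c • v) fun _ => v : Fin (k + 1) → Fin n → 𝕜) =
      c • rankOne fun _ => v := by
  funext i
  simp [rankOne, Fin.prod_univ_succ, mul_assoc]

lemma prod_vnorm_cons_smul {k n : ℕ} (c : 𝕜) (v : Fin n → 𝕜) (hv : vnorm v = 1) :
    ∏ j, vnorm ((Fin.cons (c • v) fun _ => v : Fin (k + 1) → Fin n → 𝕜) j) = ‖c‖ := by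
  simp [Fin.prod_univ_succ, vnorm_smul, hv]

lemma norm_tinner_le_of_eq_sum {d n m : ℕ} {T S : (Fin d → Fin n) → 𝕜} {c : ℝ}
    (hbound : ∀ y, ‖tinner T (rankOne y)‖ ≤ c * ∏ j, vnorm (y j))
    {x : Fin m → Fin d → Fin n → 𝕜} (hS : S = ∑ i, rankOne (x i)) :
    ‖tinner T S‖ ≤ c * ∑ i, ∏ j, vnorm (x i j) := by
  subst hS
  calc ‖tinner T (∑ i, rankOne (x i))‖ = ‖∑ i, tinner T (rankOne (x i))‖ := by
        simp only [tinner_eq_dotProduct, star_sum, dotProduct_sum]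
    _ ≤ ∑ i, ‖tinner T (rankOne (x i))‖ := norm_sum_le _ _
    _ ≤ ∑ i, c * ∏ j, vnorm (x i j) := sum_le_sum fun i _ => hbound (x i)
    _ = c * ∑ i, ∏ j, vnorm (x i j) := (mul_sum _ _ _).symm

end General

lemma prod_add_prod_le_prod {n : ℕ} (hn : 2 ≤ n) {α β r : Fin n → ℝ}
    (hα : ∀ j, 0 ≤ α j) (hβ : ∀ j, 0 ≤ β j) (hr : ∀ j, 0 ≤ r j)
    (hsq : ∀ j, α j ^ 2 + β j ^ 2 ≤ r j ^ 2) :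
    ∏ j, α j + ∏ j, β j ≤ ∏ j, r j := by
  induction n, hn using Nat.le_induction with
  | base =>
    have h0 := hsq 0
    have h1 := hsq 1
    rw [Fin.prod_univ_two, Fin.prod_univ_two, Fin.prod_univ_two,
      ← pow_le_pow_iff_left₀ (by positivity [hα 0, hα 1, hβ 0, hβ 1])
        (mul_nonneg (hr 0) (hr 1)) two_ne_zero]
    -- Cauchy–Schwarz: `(α₀α₁ + β₀β₁)² ≤ (α₀² + β₀²)(α₁² + β₁²)`
    nlinarith [sq_nonneg (α 0 * β 1 - α 1 * β 0),
      mul_nonneg (sq_nonneg (α 0)) (sq_nonneg (α 1))]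
  | succ n hn ih =>
    have hαr : α (Fin.last n) ≤ r (Fin.last n) := le_of_pow_le_pow_left₀ two_ne_zero (hr _)
      ((le_add_of_nonneg_right (sq_nonneg _)).trans (hsq _))
    have hβr : β (Fin.last n) ≤ r (Fin.last n) := le_of_pow_le_pow_left₀ two_ne_zero (hr _)
      ((le_add_of_nonneg_left (sq_nonneg _)).trans (hsq _))
    have hrest := ih (fun j => hα j.castSucc) (fun j => hβ j.castSucc) (fun j => hr j.castSucc)
      fun j => hsq j.castSucc
    rw [Fin.prod_univ_castSucc, Fin.prod_univ_castSucc, Fin.prod_univ_castSucc]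
    calc _ ≤ (∏ j : Fin n, α j.castSucc) * r (Fin.last n) +
          (∏ j : Fin n, β j.castSucc) * r (Fin.last n) :=
          add_le_add (mul_le_mul_of_nonneg_left hαr (prod_nonneg fun j _ => hα _))
            (mul_le_mul_of_nonneg_left hβr (prod_nonneg fun j _ => hβ _))
      _ ≤ (∏ j : Fin n, r j.castSucc) * r (Fin.last n) := by
          rw [← add_mul]; exact mul_le_mul_of_nonneg_right hrest (hr _)

lemma uvec_zero : uvec 0 = (√2 : ℂ)⁻¹ := if_pos rfl

lemma uvec_one : uvec 1 = Complex.I * (√2 : ℂ)⁻¹ := if_neg one_ne_zero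

lemma star_uvec_zero : star uvec 0 = (√2 : ℂ)⁻¹ := by
  rw [Pi.star_apply, uvec_zero, star_inv₀, Complex.star_def, Complex.conj_ofReal]

lemma star_uvec_one : star uvec 1 = -Complex.I * (√2 : ℂ)⁻¹ := by
  rw [Pi.star_apply, uvec_one, star_mul', star_inv₀, Complex.star_def, Complex.conj_ofReal,
    Complex.conj_I]

lemma ofReal_sqrt_two_inv_sq : (√2 : ℂ)⁻¹ ^ 2 = 2⁻¹ := by
  rw [inv_pow, ← Complex.ofReal_pow, Real.sq_sqrt zero_le_two]; norm_num

lemma norm_ofReal_sqrt_two_inv_sq : ‖(√2 : ℂ)⁻¹‖ ^ 2 = 2⁻¹ := by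
  rw [← norm_pow, ofReal_sqrt_two_inv_sq]; norm_num

lemma vnorm_uvec : vnorm uvec = 1 := by
  rw [vnorm, Fin.sum_univ_two, uvec_zero, uvec_one, norm_mul, Complex.norm_I, one_mul,
    norm_ofReal_sqrt_two_inv_sq]
  norm_num

lemma vnorm_star_uvec : vnorm (star uvec) = 1 :=
  (vnorm_star uvec).trans vnorm_uvec

lemma uvec_dotProduct_star_self : uvec ⬝ᵥ star uvec = 1 := by
  rw [dotProduct, Fin.sum_univ_two, uvec_zero, uvec_one, star_uvec_zero, star_uvec_one]
  linear_combination (1 - Complex.I ^ 2) * ofReal_sqrt_two_inv_sq - 1 / 2 * Complex.I_sq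

lemma uvec_dotProduct_self : uvec ⬝ᵥ uvec = 0 := by
  rw [dotProduct, Fin.sum_univ_two, uvec_zero, uvec_one]
  linear_combination (1 + Complex.I ^ 2) * ofReal_sqrt_two_inv_sq + 1 / 2 * Complex.I_sq

lemma norm_sq_uvec_dotProduct_add (v : Fin 2 → ℂ) :
    ‖uvec ⬝ᵥ star v‖ ^ 2 + ‖star uvec ⬝ᵥ star v‖ ^ 2 = vnorm v ^ 2 := by
  set p := conj (v 0)
  set q := conj (v 1)
  have hplus : uvec ⬝ᵥ star v = (√2 : ℂ)⁻¹ * (p + Complex.I * q) := by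
    rw [dotProduct, Fin.sum_univ_two, uvec_zero, uvec_one, Pi.star_apply, Pi.star_apply,
      Complex.star_def]
    ring
  have hminus : star uvec ⬝ᵥ star v = (√2 : ℂ)⁻¹ * (p - Complex.I * q) := by
    rw [dotProduct, Fin.sum_univ_two, star_uvec_zero, star_uvec_one, Pi.star_apply,
      Pi.star_apply, Complex.star_def]
    ring
  have hpar := parallelogram_law_with_norm ℂ p (Complex.I * q)
  rw [norm_mul, Complex.norm_I, one_mul] at hpar
  rw [hplus, hminus, norm_mul, norm_mul, mul_pow, mul_pow, ← mul_add, hpar,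
    norm_ofReal_sqrt_two_inv_sq, vnorm_sq, Fin.sum_univ_two, ← RCLike.norm_conj (v 0),
    ← RCLike.norm_conj (v 1)]
  ring

lemma Tnl_eq (n : ℕ) (lam : ℂ) :
    Tnl n lam = (lam / √2) • rankOne (fun _ => uvec) +
      (conj lam / √2) • rankOne (fun _ => star uvec) := by
  funext i
  simp [Tnl, rankOne, add_div, div_mul_eq_mul_div]

lemma tinner_Tnl_rankOne {n : ℕ} (lam : ℂ) (x : Fin n → Fin 2 → ℂ) :
    tinner (Tnl n lam) (rankOne x) = lam / √2 * ∏ j, uvec ⬝ᵥ star (x j) +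
      conj lam / √2 * ∏ j, star uvec ⬝ᵥ star (x j) := by
  rw [tinner_eq_dotProduct, Tnl_eq, add_dotProduct, smul_dotProduct, smul_dotProduct,
    ← tinner_eq_dotProduct, ← tinner_eq_dotProduct, tinner_rankOne, tinner_rankOne,
    smul_eq_mul, smul_eq_mul]

lemma norm_div_sqrt_two {z : ℂ} (hz : ‖z‖ = 1) : ‖z / √2‖ = (√2)⁻¹ := by
  rw [norm_div, hz, Complex.norm_real, Real.norm_of_nonneg (Real.sqrt_nonneg 2), one_div]

lemma norm_tinner_Tnl_rankOne_le {n : ℕ} (hn : 2 ≤ n) {lam : ℂ} (hlam : ‖lam‖ = 1)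
    (x : Fin n → Fin 2 → ℂ) :
    ‖tinner (Tnl n lam) (rankOne x)‖ ≤ (√2)⁻¹ * ∏ j, vnorm (x j) := by
  calc ‖tinner (Tnl n lam) (rankOne x)‖
      ≤ (√2)⁻¹ * ∏ j, ‖uvec ⬝ᵥ star (x j)‖ +
          (√2)⁻¹ * ∏ j, ‖star uvec ⬝ᵥ star (x j)‖ := by
        rw [tinner_Tnl_rankOne]
        refine (norm_add_le _ _).trans_eq ?_
        rw [norm_mul, norm_mul, norm_div_sqrt_two hlam,
          norm_div_sqrt_two ((RCLike.norm_conj lam).trans hlam),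
          norm_prod, norm_prod]
    _ ≤ (√2)⁻¹ * ∏ j, vnorm (x j) := by
        rw [← mul_add]
        gcongr
        exact prod_add_prod_le_prod hn (fun _ => norm_nonneg _) (fun _ => norm_nonneg _)
          (fun _ => vnorm_nonneg _) fun j => (norm_sq_uvec_dotProduct_add (x j)).le

lemma tinner_Tnl_rankOne_uvec {n : ℕ} (hn : n ≠ 0) (lam : ℂ) :
    tinner (Tnl n lam) (rankOne fun _ => uvec) = lam / √2 := by
  rw [tinner_Tnl_rankOne, uvec_dotProduct_star_self, Matrix.star_dotProduct_star,
    uvec_dotProduct_self, star_zero, prod_const_one, prod_const, zero_pow (by simpa)]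
  ring

lemma tinner_Tnl_rankOne_star_uvec {n : ℕ} (hn : n ≠ 0) (lam : ℂ) :
    tinner (Tnl n lam) (rankOne fun _ => star uvec) = conj lam / √2 := by
  rw [tinner_Tnl_rankOne, star_star, uvec_dotProduct_self, dotProduct_comm,
    uvec_dotProduct_star_self, prod_const_one, prod_const, zero_pow (by simpa)]
  ring

lemma tinner_Tnl_self {n : ℕ} (hn : n ≠ 0) {lam : ℂ} (hlam : ‖lam‖ = 1) :
    tinner (Tnl n lam) (Tnl n lam) = 1 := by
  nth_rw 2 [Tnl_eq]
  rw [tinner_eq_dotProduct, star_add, star_smul, star_smul, dotProduct_add, dotProduct_smul,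
    dotProduct_smul, ← tinner_eq_dotProduct, ← tinner_eq_dotProduct, tinner_Tnl_rankOne_uvec hn,
    tinner_Tnl_rankOne_star_uvec hn]
  simp only [Complex.star_def, smul_eq_mul, Complex.conj_mul', norm_div_sqrt_two hlam,
    norm_div_sqrt_two ((RCLike.norm_conj lam).trans hlam)]
  push_cast
  rw [ofReal_sqrt_two_inv_sq]
  norm_num

def tnlSummands (k : ℕ) (lam : ℂ) : Fin 2 → Fin (k + 1) → Fin 2 → ℂ :=
  ![Fin.cons ((lam / √2) • uvec) fun _ => uvec,
    Fin.cons ((conj lam / √2) • star uvec) fun _ => star uvec]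

lemma Tnl_succ_eq_sum_rankOne (k : ℕ) (lam : ℂ) :
    Tnl (k + 1) lam = ∑ i, rankOne (tnlSummands k lam i) := by
  simp [Fin.sum_univ_two, tnlSummands, Tnl_eq, rankOne_cons_smul]

lemma sum_prod_vnorm_tnlSummands (k : ℕ) {lam : ℂ} (hlam : ‖lam‖ = 1) :
    ∑ i, ∏ j, vnorm (tnlSummands k lam i j) = √2 := by
  rw [Fin.sum_univ_two, tnlSummands, Matrix.cons_val_zero, Matrix.cons_val_one,
    Matrix.cons_val_zero, prod_vnorm_cons_smul _ _ vnorm_uvec,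
    prod_vnorm_cons_smul _ _ vnorm_star_uvec, norm_div_sqrt_two hlam,
    norm_div_sqrt_two ((RCLike.norm_conj lam).trans hlam), ← two_mul, ← div_eq_mul_inv,
    Real.div_sqrt]

/-- For `|λ| = 1` and `n ≥ 2`, `‖T_{n,λ}‖_∞ = 1/√2` and
`‖T_{n,λ}‖₁ = √2`. -/
theorem stmt17 (n : ℕ) (hn : 2 ≤ n) (lam : ℂ) (hlam : ‖lam‖ = 1) :
    specNorm (Tnl n lam) = (Real.sqrt 2)⁻¹ ∧ nucNorm (Tnl n lam) = Real.sqrt 2 := by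
  obtain ⟨k, rfl⟩ : ∃ k, n = k + 1 := ⟨n - 1, by omega⟩
  have hbound := norm_tinner_Tnl_rankOne_le hn hlam
  constructor
  · refine IsGreatest.csSup_eq ⟨⟨fun _ => uvec, fun _ => vnorm_uvec, ?_⟩, ?_⟩
    · rw [tinner_Tnl_rankOne_uvec k.succ_ne_zero, norm_div_sqrt_two hlam]
    · rintro _ ⟨x, hx, rfl⟩
      simpa [hx] using hbound x
  · refine IsLeast.csInf_eq ⟨⟨2, _, Tnl_succ_eq_sum_rankOne k lam,
      (sum_prod_vnorm_tnlSummands k hlam).symm⟩, ?_⟩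
    rintro _ ⟨m, x, hT, rfl⟩
    have h := norm_tinner_le_of_eq_sum hbound hT
    rw [tinner_Tnl_self k.succ_ne_zero hlam, norm_one] at h
    rwa [← div_eq_inv_mul, le_div_iff₀ (by positivity), one_mul] at h
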